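/- arXiv:1301.3559 — 5 statements merged into one kernel-verified Lean document; each statement's English description precedes it below -/
import Mathlib

section
/- Let k ≥ 1 be an integer, a_0 < a_1 < … < a_k real numbers, r > 0, and s_i ∈ (a_{i-1}, a_i) for i = 1, …, k. Define x_j² := r² · (∏_{i=1}^{k} (s_i − a_j)) / (∏_{i=0, i≠j}^{k} (a_i − a_j)) for j = 0, …, k. Then for each i = 1, …, k the identity ∑_{j=0}^{k} x_j²/(s_i − a_j)² = −r² · (∏_{j=1, j≠i}^{k} (s_i − s_j)) / (∏_{j=0}^{k} (s_i − a_j)) holds. -/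
/-!
The polynomial `f = ∏_{m ≠ i} (X - s_m)` has degree `k - 1 < k + 1`, so its quotient by
`∏_j (X - a_j)` has the partial fraction expansion `∑_j w_j f(a_j) / (X - a_j)` with the
barycentric weights `w_j = ∏_{m ≠ j} (a_j - a_m)⁻¹`. Evaluated at `X = s_i` this is the claimed
identity: after turning every factor `s_m - a_j`, `a_m - a_j` in `x_j²` around (there are `k` of
each, so the signs cancel), the summand `x_j² / (s_i - a_j)²` is `-r² w_j f(a_j) / (s_i - a_j)`.
-/

open Finset Polynomial

theorem Lagrange.eval_div_eval_nodal_eq_sum {F ι : Type*} [Field F] [DecidableEq ι] {s : Finset ι}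
    {v : ι → F} (hvs : Set.InjOn v s) {f : F[X]} (hf : f.degree < #s) {x : F}
    (hx : ∀ i ∈ s, x ≠ v i) :
    f.eval x / (nodal s v).eval x = ∑ i ∈ s, nodalWeight s v i * (x - v i)⁻¹ * f.eval (v i) := by
  conv_lhs => rw [eq_interpolate hvs hf]
  rw [eval_interpolate_not_at_node _ hx, mul_div_cancel_left₀ _ (eval_nodal_not_at_node hx)]

theorem Finset.prod_sub_comm {ι R : Type*} [CommRing R] (t : Finset ι) (f g : ι → R) :
    ∏ m ∈ t, (f m - g m) = (-1) ^ #t * ∏ m ∈ t, (g m - f m) := by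
  rw [← prod_neg]; simp only [neg_sub]

theorem mul_prod_sub_div_prod_sub_div_sq {F ι κ : Type*} [Field F] [DecidableEq ι]
    {t : Finset ι} {u : Finset κ} (hcard : #t = #u) (c x : F) (s : ι → F) (b : κ → F)
    {i : ι} (hi : i ∈ t) (hx : s i ≠ x) :
    c * (∏ m ∈ t, (s m - x)) / (∏ m ∈ u, (b m - x)) / (s i - x) ^ 2 =
      -c * ((∏ m ∈ u, (x - b m))⁻¹ * (s i - x)⁻¹ * ∏ m ∈ t.erase i, (x - s m)) := by
  have hsx : s i - x ≠ 0 := sub_ne_zero.mpr hx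
  rw [prod_sub_comm t, prod_sub_comm u b, ← hcard, ← mul_prod_erase t _ hi]
  field_simp
  ring

theorem Monotone.ne_of_lt_of_lt_fin {α : Type*} [Preorder α] {n : ℕ} {f : Fin (n + 1) → α}
    (hf : Monotone f) (i : Fin n) {x : α} (h1 : f i.castSucc < x) (h2 : x < f i.succ)
    (j : Fin (n + 1)) : f j ≠ x := by
  rintro rfl
  exact (hf.reflect_lt h1).not_ge (Fin.le_castSucc_iff.mpr (hf.reflect_lt h2))

theorem stmt_1_general (k : ℕ) (a : Fin (k + 1) → ℝ) (ha : StrictMono a)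
    (r : ℝ) (s : Fin k → ℝ)
    (hs : ∀ i : Fin k, a i.castSucc < s i ∧ s i < a i.succ)
    (xsq : Fin (k + 1) → ℝ)
    (hxsq : ∀ j, xsq j =
      r ^ 2 * (∏ i : Fin k, (s i - a j)) / ∏ i ∈ Finset.univ.erase j, (a i - a j)) :
    ∀ i : Fin k, ∑ j, xsq j / (s i - a j) ^ 2 =
      -(r ^ 2) * (∏ j ∈ Finset.univ.erase i, (s i - s j)) /
        ∏ j : Fin (k + 1), (s i - a j) := by
  intro i
  have hsa : ∀ j, s i ≠ a j := fun j => (ha.monotone.ne_of_lt_of_lt_fin i (hs i).1 (hs i).2 j).symm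
  have hdeg : (Lagrange.nodal (univ.erase i) s).degree < #(univ : Finset (Fin (k + 1))) := by
    rw [Lagrange.degree_nodal, card_erase_of_mem (mem_univ i)]
    simp only [card_univ, Fintype.card_fin]
    exact_mod_cast (by omega : k - 1 < k + 1)
  have hpf := Lagrange.eval_div_eval_nodal_eq_sum ha.injective.injOn hdeg (fun j _ => hsa j)
  simp only [Lagrange.eval_nodal, Lagrange.nodalWeight, prod_inv_distrib] at hpf
  calc ∑ j, xsq j / (s i - a j) ^ 2
      = ∑ j, -r ^ 2 * ((∏ m ∈ univ.erase j, (a j - a m))⁻¹ * (s i - a j)⁻¹ *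
          ∏ m ∈ univ.erase i, (a j - s m)) := by
        refine sum_congr rfl fun j _ => ?_
        rw [hxsq, mul_prod_sub_div_prod_sub_div_sq (by simp) _ _ _ _ (mem_univ i) (hsa j)]
    _ = _ := by rw [← mul_sum, ← hpf, mul_div_assoc]

/-- **Scale factors of sphero-conal coordinates** (equation (2.8) of the paper).
If `x_j² = r² ∏ᵢ (s_i − a_j) / ∏_{i ≠ j} (a_i − a_j)`, then
`∑_j x_j²/(s_i − a_j)² = −r² ∏_{j ≠ i}(s_i − s_j) / ∏_j (s_i − a_j)` (which equals `4 H_{s_i}²`). -/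
theorem stmt_1 (k : ℕ) (hk : 1 ≤ k) (a : Fin (k + 1) → ℝ) (ha : StrictMono a)
    (r : ℝ) (hr : 0 < r) (s : Fin k → ℝ)
    (hs : ∀ i : Fin k, a i.castSucc < s i ∧ s i < a i.succ)
    (xsq : Fin (k + 1) → ℝ)
    (hxsq : ∀ j, xsq j =
      r ^ 2 * (∏ i : Fin k, (s i - a j)) / ∏ i ∈ Finset.univ.erase j, (a i - a j)) :
    ∀ i : Fin k, ∑ j, xsq j / (s i - a j) ^ 2 =
      -(r ^ 2) * (∏ j ∈ Finset.univ.erase i, (s i - s j)) /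
        ∏ j : Fin (k + 1), (s i - a j) :=
  stmt_1_general k a ha r s hs xsq hxsq
end

section
/- Fix real numbers a_0 < a_1 < a_2 < a_3. For (x,y,z) ∈ ℝ³ write ρ² = x² + y² + z² and consider the cubic polynomial p(s) = (ρ² − 1)²(s − a_1)(s − a_2)(s − a_3) + 4x²(s − a_0)(s − a_2)(s − a_3) + 4y²(s − a_0)(s − a_1)(s − a_3) + 4z²(s − a_0)(s − a_1)(s − a_2). Then for every (x,y,z) ∈ ℝ³, p has degree exactly 3 and possesses three real roots s_1 ≤ s_2 ≤ s_3 (counted with multiplicity) satisfying a_0 ≤ s_1 ≤ a_1 ≤ s_2 ≤ a_2 ≤ s_3 ≤ a_3. If moreover x > 0, y > 0, z > 0 and x² + y² + z² > 1, then the roots satisfy the strict inequalities a_0 < s_1 < a_1 < s_2 < a_2 < s_3 < a_3. -/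
/-!
Writing `w₀ = (ρ² − 1)²`, `w₁ = 4x²`, `w₂ = 4y²`, `w₃ = 4z²`, the cubic is
`p(s) = ∑ᵢ wᵢ ∏_{j ≠ i} (s − aⱼ)`, so at a node only one term survives:
`p(aᵢ) = wᵢ ∏_{j ≠ i} (aᵢ − aⱼ)`, whose sign is `(−1)^(i+1)` (weakly, and strictly when `wᵢ > 0`).
Its leading coefficient `∑ wᵢ = (ρ² + 1)²` is positive. By the intermediate value theorem `p`
has a root in `[a₀, a₁]`; dividing it out leaves a quadratic that changes sign on `[a₂, a₃]`,
so `p` splits over `ℝ`. Once the roots are sorted, the signs of `p` at the nodes force them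
to interlace with the nodes, and a node where `p` does not vanish is not a root.
-/

section Cubic

variable {c b₂ b₁ b₀ r : ℝ}

theorem cubic_eq_sub_mul_quadratic (hr : c * r ^ 3 + b₂ * r ^ 2 + b₁ * r + b₀ = 0) (s : ℝ) :
    c * s ^ 3 + b₂ * s ^ 2 + b₁ * s + b₀
      = (s - r) * (c * s ^ 2 + (b₂ + c * r) * s + (b₁ + b₂ * r + c * r ^ 2)) := by
  linear_combination hr

theorem quadratic_eq_mul_sub_mul_sub (hc : c ≠ 0) (hr : c * r ^ 2 + b₁ * r + b₀ = 0) (s : ℝ) :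
    c * s ^ 2 + b₁ * s + b₀ = c * (s - (-b₁ / c - r)) * (s - r) := by
  field_simp
  linear_combination hr

theorem exists_cubic_eq_mul_sub_mul_sub_mul_sub {f : ℝ → ℝ} {a0 a1 a2 a3 : ℝ}
    (hf : ∀ s, f s = c * s ^ 3 + b₂ * s ^ 2 + b₁ * s + b₀) (hc : 0 < c)
    (h01 : a0 ≤ a1) (h12 : a1 < a2) (h23 : a2 ≤ a3)
    (h0 : f a0 ≤ 0) (h1 : 0 ≤ f a1) (h2 : f a2 ≤ 0) (h3 : 0 ≤ f a3) :
    ∃ r1 r2 r3 : ℝ, ∀ s, f s = c * (s - r1) * (s - r2) * (s - r3) := by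
  have hcont : Continuous f := by
    rw [show f = _ from funext hf]
    fun_prop
  obtain ⟨r1, ⟨-, hr1a1⟩, hr1⟩ := intermediate_value_Icc h01 hcont.continuousOn ⟨h0, h1⟩
  set g : ℝ → ℝ := fun s => c * s ^ 2 + (b₂ + c * r1) * s + (b₁ + b₂ * r1 + c * r1 ^ 2)
  have hfg (s : ℝ) : f s = (s - r1) * g s := by
    rw [hf, cubic_eq_sub_mul_quadratic (by rwa [← hf])]
  have hg2 : g a2 ≤ 0 :=
    nonpos_of_mul_nonpos_right (hfg a2 ▸ h2) (by linarith)
  have hg3 : 0 ≤ g a3 :=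
    nonneg_of_mul_nonneg_right (hfg a3 ▸ h3) (by linarith)
  obtain ⟨r3, -, hr3⟩ :=
    intermediate_value_Icc h23 (by fun_prop : Continuous g).continuousOn ⟨hg2, hg3⟩
  have hg (s : ℝ) : g s = c * (s - (-(b₂ + c * r1) / c - r3)) * (s - r3) :=
    quadratic_eq_mul_sub_mul_sub hc.ne' hr3 s
  exact ⟨r1, -(b₂ + c * r1) / c - r3, r3, fun s => by rw [hfg, hg]; ring⟩

end Cubic

theorem exists_sorted_mul_sub (r1 r2 r3 : ℝ) : ∃ t1 t2 t3 : ℝ, t1 ≤ t2 ∧ t2 ≤ t3 ∧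
    ∀ s : ℝ, (s - r1) * (s - r2) * (s - r3) = (s - t1) * (s - t2) * (s - t3) := by
  rcases le_total r1 r2 with h12 | h12 <;> rcases le_total r2 r3 with h23 | h23 <;>
    rcases le_total r1 r3 with h13 | h13 <;>
    first
    | exact ⟨r1, r2, r3, h12, h23, fun s => by ring⟩
    | exact ⟨r1, r3, r2, h13, h23, fun s => by ring⟩
    | exact ⟨r2, r1, r3, h12, h13, fun s => by ring⟩
    | exact ⟨r2, r3, r1, h23, h13, fun s => by ring⟩
    | exact ⟨r3, r1, r2, h13, h12, fun s => by ring⟩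
    | exact ⟨r3, r2, r1, h23, h12, fun s => by ring⟩

-- If one of the inequalities failed, the signs of the three factors `aᵢ - tⱼ` at an adjacent
-- node would all be known and would contradict the sign of the cubic there.
theorem interlacing_of_alternating {c t1 t2 t3 a0 a1 a2 a3 : ℝ} (hc : 0 < c)
    (ht12 : t1 ≤ t2) (ht23 : t2 ≤ t3) (h01 : a0 < a1) (h12 : a1 < a2) (h23 : a2 < a3)
    (h0 : c * (a0 - t1) * (a0 - t2) * (a0 - t3) ≤ 0)
    (h1 : 0 ≤ c * (a1 - t1) * (a1 - t2) * (a1 - t3))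
    (h2 : c * (a2 - t1) * (a2 - t2) * (a2 - t3) ≤ 0)
    (h3 : 0 ≤ c * (a3 - t1) * (a3 - t2) * (a3 - t3)) :
    a0 ≤ t1 ∧ t1 ≤ a1 ∧ a1 ≤ t2 ∧ t2 ≤ a2 ∧ a2 ≤ t3 ∧ t3 ≤ a3 := by
  have ht1a1 : t1 ≤ a1 := by
    by_contra! h
    nlinarith [mul_pos (mul_pos (mul_pos hc (sub_pos.2 h)) (sub_pos.2 (h.trans_le ht12)))
      (sub_pos.2 ((h.trans_le ht12).trans_le ht23))]
  have ha2t3 : a2 ≤ t3 := by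
    by_contra! h
    nlinarith [mul_pos (mul_pos (mul_pos hc (sub_pos.2 ((ht12.trans_lt (ht23.trans_lt h)))))
      (sub_pos.2 (ht23.trans_lt h))) (sub_pos.2 h)]
  have ht2a2 : t2 ≤ a2 := by
    by_contra! h
    nlinarith [mul_pos (mul_pos (mul_pos hc (sub_pos.2 (ht1a1.trans_lt h12))) (sub_pos.2 h))
      (sub_pos.2 (h.trans_le ht23))]
  have ha1t2 : a1 ≤ t2 := by
    by_contra! h
    nlinarith [mul_pos (mul_pos (mul_pos hc (sub_pos.2 (ht12.trans_lt h))) (sub_pos.2 h))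
      (sub_pos.2 (h12.trans_le ha2t3))]
  refine ⟨?_, ht1a1, ha1t2, ht2a2, ha2t3, ?_⟩
  · by_contra! h
    nlinarith [mul_pos (mul_pos (mul_pos hc (sub_pos.2 h)) (sub_pos.2 (h01.trans_le ha1t2)))
      (sub_pos.2 (h01.trans_le (ha1t2.trans ht23)))]
  · by_contra! h
    nlinarith [mul_pos (mul_pos (mul_pos hc (sub_pos.2 ((ht12.trans ht2a2).trans_lt h23)))
      (sub_pos.2 (ht2a2.trans_lt h23))) (sub_pos.2 h)]

theorem exists_interlacing_factorization {f : ℝ → ℝ} {c b₂ b₁ b₀ a0 a1 a2 a3 : ℝ}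
    (hf : ∀ s, f s = c * s ^ 3 + b₂ * s ^ 2 + b₁ * s + b₀) (hc : 0 < c)
    (h01 : a0 < a1) (h12 : a1 < a2) (h23 : a2 < a3)
    (h0 : f a0 ≤ 0) (h1 : 0 ≤ f a1) (h2 : f a2 ≤ 0) (h3 : 0 ≤ f a3) :
    ∃ t1 t2 t3 : ℝ, (a0 ≤ t1 ∧ t1 ≤ a1 ∧ a1 ≤ t2 ∧ t2 ≤ a2 ∧ a2 ≤ t3 ∧ t3 ≤ a3) ∧
      ∀ s, f s = c * (s - t1) * (s - t2) * (s - t3) := by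
  obtain ⟨r1, r2, r3, hr⟩ :=
    exists_cubic_eq_mul_sub_mul_sub_mul_sub hf hc h01.le h12 h23.le h0 h1 h2 h3
  obtain ⟨t1, t2, t3, ht12, ht23, hsort⟩ := exists_sorted_mul_sub r1 r2 r3
  have ht (s : ℝ) : f s = c * (s - t1) * (s - t2) * (s - t3) := by
    rw [hr, mul_assoc c, mul_assoc c, hsort, ← mul_assoc, ← mul_assoc]
  rw [ht] at h0 h1 h2 h3
  exact ⟨t1, t2, t3, interlacing_of_alternating hc ht12 ht23 h01 h12 h23 h0 h1 h2 h3, ht⟩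

theorem strict_interlacing_of_ne_zero {f : ℝ → ℝ} {c t1 t2 t3 a0 a1 a2 a3 : ℝ}
    (hf : ∀ s, f s = c * (s - t1) * (s - t2) * (s - t3))
    (ht : a0 ≤ t1 ∧ t1 ≤ a1 ∧ a1 ≤ t2 ∧ t2 ≤ a2 ∧ a2 ≤ t3 ∧ t3 ≤ a3)
    (h0 : f a0 ≠ 0) (h1 : f a1 ≠ 0) (h2 : f a2 ≠ 0) (h3 : f a3 ≠ 0) :
    a0 < t1 ∧ t1 < a1 ∧ a1 < t2 ∧ t2 < a2 ∧ a2 < t3 ∧ t3 < a3 := by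
  have hroot : f t1 = 0 ∧ f t2 = 0 ∧ f t3 = 0 := by simp [hf]
  obtain ⟨ht01, ht11, ht12, ht22, ht23, ht33⟩ := ht
  refine ⟨ht01.lt_of_ne ?_, ht11.lt_of_ne ?_, ht12.lt_of_ne ?_, ht22.lt_of_ne ?_,
    ht23.lt_of_ne ?_, ht33.lt_of_ne ?_⟩ <;> rintro rfl <;> simp_all

def weightedNodeCubic (w0 w1 w2 w3 a0 a1 a2 a3 s : ℝ) : ℝ :=
  w0 * (s - a1) * (s - a2) * (s - a3) + w1 * (s - a0) * (s - a2) * (s - a3)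
    + w2 * (s - a0) * (s - a1) * (s - a3) + w3 * (s - a0) * (s - a1) * (s - a2)

section WeightedNodeCubic

variable (w0 w1 w2 w3 a0 a1 a2 a3 : ℝ)

theorem weightedNodeCubic_eq_cubic : ∃ b₂ b₁ b₀ : ℝ, ∀ s,
    weightedNodeCubic w0 w1 w2 w3 a0 a1 a2 a3 s
      = (w0 + w1 + w2 + w3) * s ^ 3 + b₂ * s ^ 2 + b₁ * s + b₀ :=
  ⟨-(w0 * (a1 + a2 + a3) + w1 * (a0 + a2 + a3) + w2 * (a0 + a1 + a3) + w3 * (a0 + a1 + a2)),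
    w0 * (a1 * a2 + a1 * a3 + a2 * a3) + w1 * (a0 * a2 + a0 * a3 + a2 * a3)
      + w2 * (a0 * a1 + a0 * a3 + a1 * a3) + w3 * (a0 * a1 + a0 * a2 + a1 * a2),
    -(w0 * (a1 * a2 * a3) + w1 * (a0 * a2 * a3) + w2 * (a0 * a1 * a3) + w3 * (a0 * a1 * a2)),
    fun s => by unfold weightedNodeCubic; ring⟩

theorem weightedNodeCubic_at_nodes :
    weightedNodeCubic w0 w1 w2 w3 a0 a1 a2 a3 a0 = -(w0 * ((a1 - a0) * (a2 - a0) * (a3 - a0))) ∧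
    weightedNodeCubic w0 w1 w2 w3 a0 a1 a2 a3 a1 = w1 * ((a1 - a0) * (a2 - a1) * (a3 - a1)) ∧
    weightedNodeCubic w0 w1 w2 w3 a0 a1 a2 a3 a2 = -(w2 * ((a2 - a0) * (a2 - a1) * (a3 - a2))) ∧
    weightedNodeCubic w0 w1 w2 w3 a0 a1 a2 a3 a3 = w3 * ((a3 - a0) * (a3 - a1) * (a3 - a2)) := by
  unfold weightedNodeCubic
  refine ⟨?_, ?_, ?_, ?_⟩ <;> ring

variable {w0 w1 w2 w3 a0 a1 a2 a3}

theorem weightedNodeCubic_alternating (h01 : a0 < a1) (h12 : a1 < a2) (h23 : a2 < a3)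
    (hw0 : 0 ≤ w0) (hw1 : 0 ≤ w1) (hw2 : 0 ≤ w2) (hw3 : 0 ≤ w3) :
    weightedNodeCubic w0 w1 w2 w3 a0 a1 a2 a3 a0 ≤ 0 ∧
    0 ≤ weightedNodeCubic w0 w1 w2 w3 a0 a1 a2 a3 a1 ∧
    weightedNodeCubic w0 w1 w2 w3 a0 a1 a2 a3 a2 ≤ 0 ∧
    0 ≤ weightedNodeCubic w0 w1 w2 w3 a0 a1 a2 a3 a3 := by
  obtain ⟨e0, e1, e2, e3⟩ := weightedNodeCubic_at_nodes w0 w1 w2 w3 a0 a1 a2 a3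
  have := sub_pos.2 h01
  have := sub_pos.2 h12
  have := sub_pos.2 h23
  have := sub_pos.2 (h01.trans h12)
  have := sub_pos.2 (h12.trans h23)
  have := sub_pos.2 (h01.trans (h12.trans h23))
  rw [e0, e1, e2, e3]
  refine ⟨?_, ?_, ?_, ?_⟩ <;> first | positivity | (rw [neg_nonpos]; positivity)

theorem weightedNodeCubic_ne_zero_at_nodes (h01 : a0 < a1) (h12 : a1 < a2) (h23 : a2 < a3)
    (hw0 : w0 ≠ 0) (hw1 : w1 ≠ 0) (hw2 : w2 ≠ 0) (hw3 : w3 ≠ 0) :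
    weightedNodeCubic w0 w1 w2 w3 a0 a1 a2 a3 a0 ≠ 0 ∧
    weightedNodeCubic w0 w1 w2 w3 a0 a1 a2 a3 a1 ≠ 0 ∧
    weightedNodeCubic w0 w1 w2 w3 a0 a1 a2 a3 a2 ≠ 0 ∧
    weightedNodeCubic w0 w1 w2 w3 a0 a1 a2 a3 a3 ≠ 0 := by
  obtain ⟨e0, e1, e2, e3⟩ := weightedNodeCubic_at_nodes w0 w1 w2 w3 a0 a1 a2 a3
  have := sub_ne_zero.2 h01.ne'
  have := sub_ne_zero.2 h12.ne'
  have := sub_ne_zero.2 h23.ne'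
  have := sub_ne_zero.2 (h01.trans h12).ne'
  have := sub_ne_zero.2 (h12.trans h23).ne'
  have := sub_ne_zero.2 (h01.trans (h12.trans h23)).ne'
  rw [e0, e1, e2, e3]
  simp_all

end WeightedNodeCubic

/-- **5-cyclide coordinates of an arbitrary point** (Section 4 of the paper).
For every `(x,y,z) ∈ ℝ³` the cubic
`p(s) = (ρ²−1)²(s−a₁)(s−a₂)(s−a₃) + 4x²(s−a₀)(s−a₂)(s−a₃) + 4y²(s−a₀)(s−a₁)(s−a₃)
      + 4z²(s−a₀)(s−a₁)(s−a₂)`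
has degree exactly 3 (its leading coefficient `(ρ²−1)² + 4x² + 4y² + 4z²` is nonzero)
and factors as `p(s) = c (s−s₁)(s−s₂)(s−s₃)` with `a₀ ≤ s₁ ≤ a₁ ≤ s₂ ≤ a₂ ≤ s₃ ≤ a₃`;
if `x,y,z > 0` and `x²+y²+z² > 1` all these inequalities are strict. -/
theorem stmt_4 (a0 a1 a2 a3 : ℝ) (h01 : a0 < a1) (h12 : a1 < a2) (h23 : a2 < a3)
    (x y z : ℝ) :
    ∃ s1 s2 s3 : ℝ,
      (a0 ≤ s1 ∧ s1 ≤ a1 ∧ a1 ≤ s2 ∧ s2 ≤ a2 ∧ a2 ≤ s3 ∧ s3 ≤ a3) ∧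
      ((x ^ 2 + y ^ 2 + z ^ 2 - 1) ^ 2 + 4 * x ^ 2 + 4 * y ^ 2 + 4 * z ^ 2) ≠ 0 ∧
      (∀ s : ℝ,
        (x ^ 2 + y ^ 2 + z ^ 2 - 1) ^ 2 * (s - a1) * (s - a2) * (s - a3)
          + 4 * x ^ 2 * (s - a0) * (s - a2) * (s - a3)
          + 4 * y ^ 2 * (s - a0) * (s - a1) * (s - a3)
          + 4 * z ^ 2 * (s - a0) * (s - a1) * (s - a2)
        = ((x ^ 2 + y ^ 2 + z ^ 2 - 1) ^ 2 + 4 * x ^ 2 + 4 * y ^ 2 + 4 * z ^ 2)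
            * (s - s1) * (s - s2) * (s - s3)) ∧
      (0 < x → 0 < y → 0 < z → 1 < x ^ 2 + y ^ 2 + z ^ 2 →
        a0 < s1 ∧ s1 < a1 ∧ a1 < s2 ∧ s2 < a2 ∧ a2 < s3 ∧ s3 < a3) := by
  set p := weightedNodeCubic ((x ^ 2 + y ^ 2 + z ^ 2 - 1) ^ 2) (4 * x ^ 2) (4 * y ^ 2) (4 * z ^ 2)
    a0 a1 a2 a3
  have hc : 0 < (x ^ 2 + y ^ 2 + z ^ 2 - 1) ^ 2 + 4 * x ^ 2 + 4 * y ^ 2 + 4 * z ^ 2 := by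
    rw [show (x ^ 2 + y ^ 2 + z ^ 2 - 1) ^ 2 + 4 * x ^ 2 + 4 * y ^ 2 + 4 * z ^ 2
      = (x ^ 2 + y ^ 2 + z ^ 2 + 1) ^ 2 by ring]
    positivity
  obtain ⟨b₂, b₁, b₀, hp⟩ := weightedNodeCubic_eq_cubic ((x ^ 2 + y ^ 2 + z ^ 2 - 1) ^ 2)
    (4 * x ^ 2) (4 * y ^ 2) (4 * z ^ 2) a0 a1 a2 a3
  obtain ⟨h0, h1, h2, h3⟩ : p a0 ≤ 0 ∧ 0 ≤ p a1 ∧ p a2 ≤ 0 ∧ 0 ≤ p a3 :=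
    weightedNodeCubic_alternating h01 h12 h23 (by positivity) (by positivity) (by positivity)
      (by positivity)
  obtain ⟨s1, s2, s3, hs, hfac⟩ :=
    exists_interlacing_factorization hp hc h01 h12 h23 h0 h1 h2 h3
  refine ⟨s1, s2, s3, hs, hc.ne', hfac, fun hx hy hz hρ => ?_⟩
  obtain ⟨n0, n1, n2, n3⟩ : p a0 ≠ 0 ∧ p a1 ≠ 0 ∧ p a2 ≠ 0 ∧ p a3 ≠ 0 :=
    weightedNodeCubic_ne_zero_at_nodes h01 h12 h23 (pow_ne_zero 2 (by linarith)) (by positivity)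
      (by positivity) (by positivity)
  exact strict_interlacing_of_ne_zero hfac hs n0 n1 n2 n3
end

section
/- Let u : [a,b] → ℝ be a continuously differentiable function, and let a ≤ c < d ≤ b. Then, for all t ∈ [a,b], (d − c)·|u(t)|² ≤ 2·∫_c^d |u(r)|² dr + 2(b − a)(d − c)·∫_a^b |u'(r)|² dr. -/
/-!
By the fundamental theorem of calculus and Cauchy–Schwarz, `(u t - u s)² ≤ (b - a) ∫_a^b u'²`
for all `s, t ∈ [a, b]`, hence `u(t)² ≤ 2 u(s)² + 2 (b - a) ∫_a^b u'²`. Integrating this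
in `s` over `[c, d]` gives the claim.
-/

open intervalIntegral Set
open MeasureTheory (volume)

theorem sq_intervalIntegral_le_mul_integral_sq {α β : ℝ} (hαβ : α ≤ β) {f : ℝ → ℝ}
    (hf : IntervalIntegrable f volume α β)
    (hf2 : IntervalIntegrable (fun r => f r ^ 2) volume α β) :
    (∫ r in α..β, f r) ^ 2 ≤ (β - α) * ∫ r in α..β, f r ^ 2 := by
  set L := β - α
  set A := ∫ r in α..β, f r
  -- Cauchy–Schwarz via `0 ≤ ∫ (L f - A)² = L (L ∫ f² - A²)`.
  have hexpand : (∫ r in α..β, (L * f r - A) ^ 2)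
      = L * (L * (∫ r in α..β, f r ^ 2) - A ^ 2) := by
    have hpoly : (fun r => (L * f r - A) ^ 2)
        = fun r => L ^ 2 * f r ^ 2 - (2 * L * A) * f r + A ^ 2 := by
      funext r; ring
    rw [hpoly, integral_add ((hf2.const_mul _).sub (hf.const_mul _)) intervalIntegrable_const,
      integral_sub (hf2.const_mul _) (hf.const_mul _), integral_const_mul, integral_const_mul,
      integral_const, smul_eq_mul]
    ring
  have hnonneg : 0 ≤ L * (L * (∫ r in α..β, f r ^ 2) - A ^ 2) :=
    hexpand ▸ integral_nonneg hαβ fun _ _ => sq_nonneg _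
  rcases hαβ.eq_or_lt with rfl | hlt
  · simp [A]
  · linarith [(mul_nonneg_iff_of_pos_left (sub_pos.mpr hlt)).mp hnonneg]

theorem sq_sub_le_mul_integral_sq_deriv {a b s t : ℝ} {u u' : ℝ → ℝ}
    (hs : s ∈ Icc a b) (ht : t ∈ Icc a b)
    (hu : ∀ x ∈ Icc a b, HasDerivAt u (u' x) x) (hu' : ContinuousOn u' (Icc a b)) :
    (u t - u s) ^ 2 ≤ (b - a) * ∫ r in a..b, u' r ^ 2 := by
  wlog hst : s ≤ t generalizing s t
  · rw [← neg_sub, neg_sq]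
    exact this ht hs (le_of_not_ge hst)
  have hsub : uIcc s t ⊆ Icc a b := by
    rw [uIcc_of_le hst]; exact Icc_subset_Icc hs.1 ht.2
  have hftc : ∫ r in s..t, u' r = u t - u s :=
    integral_eq_sub_of_hasDerivAt (fun x hx => hu x (hsub hx)) (hu'.mono hsub).intervalIntegrable
  have hab : a ≤ b := hs.1.trans hs.2
  have hu'2 : IntervalIntegrable (fun r => u' r ^ 2) volume a b :=
    ((uIcc_of_le hab).symm ▸ hu'.pow 2).intervalIntegrable
  calc (u t - u s) ^ 2 = (∫ r in s..t, u' r) ^ 2 := by rw [hftc]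
    _ ≤ (t - s) * ∫ r in s..t, u' r ^ 2 :=
      sq_intervalIntegral_le_mul_integral_sq hst (hu'.mono hsub).intervalIntegrable
        ((hu'.pow 2).mono hsub).intervalIntegrable
    _ ≤ (b - a) * ∫ r in a..b, u' r ^ 2 :=
      mul_le_mul (by linarith [hs.1, ht.2])
        (integral_mono_interval hs.1 hst ht.2 (.of_forall fun _ => sq_nonneg _) hu'2)
        (integral_nonneg hst fun _ _ => sq_nonneg _) (by linarith)

/-- **Lemma 5.1 of the paper.** If `u` is continuously differentiable on `[a,b]` and
`a ≤ c < d ≤ b`, then for all `t ∈ [a,b]`,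
`(d−c)|u(t)|² ≤ 2 ∫_c^d |u|² + 2(b−a)(d−c) ∫_a^b |u'|²`. -/
theorem stmt_6 (a b c d : ℝ) (hac : a ≤ c) (hcd : c < d) (hdb : d ≤ b)
    (u u' : ℝ → ℝ)
    (hu : ∀ t ∈ Set.Icc a b, HasDerivAt u (u' t) t)
    (hu' : ContinuousOn u' (Set.Icc a b)) :
    ∀ t ∈ Set.Icc a b,
      (d - c) * |u t| ^ 2 ≤
        2 * (∫ r in c..d, |u r| ^ 2) +
          2 * (b - a) * (d - c) * (∫ r in a..b, |u' r| ^ 2) := by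
  intro t ht
  simp only [sq_abs]
  set K := ∫ r in a..b, u' r ^ 2
  have hcd_sub : Icc c d ⊆ Icc a b := Icc_subset_Icc hac hdb
  have hpointwise : ∀ s ∈ Icc c d, u t ^ 2 ≤ 2 * u s ^ 2 + 2 * (b - a) * K := fun s hs => by
    nlinarith [sq_sub_le_mul_integral_sq_deriv (hcd_sub hs) ht hu hu', sq_nonneg (u t - 2 * u s)]
  have hu_cont : ContinuousOn u (Icc c d) := fun x hx =>
    (hu x (hcd_sub hx)).continuousAt.continuousWithinAt
  have hu2 : IntervalIntegrable (fun s => u s ^ 2) volume c d :=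
    ((uIcc_of_le hcd.le).symm ▸ hu_cont.pow 2).intervalIntegrable
  have hint := integral_mono_on hcd.le intervalIntegrable_const
    ((hu2.const_mul 2).add intervalIntegrable_const) hpointwise
  rw [integral_add (hu2.const_mul 2) intervalIntegrable_const,
    integral_const_mul, integral_const, integral_const, smul_eq_mul,
    smul_eq_mul] at hint
  linarith
end

section
/- Let q : [a,b] → ℝ be continuous and let u : [a,b] → ℝ be the solution of u''(t) = q(t)·u(t) with initial conditions u(a) = 1, u'(a) = 0. Suppose q(t) ≥ 0 for all t ∈ [a,b] and q(t) ≥ λ² for all t ∈ [c,b], where λ > 0 and c ∈ [a,b). Then u(t) > 0 for all t ∈ [a,b], and u(b)/u(t) ≥ (1/2)·e^{λ(b − c)} for all t ∈ [a,c]. -/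
/-!
Where `u > 0`, the equation gives `u'' = q u ≥ 0`, so `u'` stays nonnegative and `u` nondecreasing
from `u(a) = 1`; applied on `[a, T]` for the first zero `T` of `u`, this forces `u(T) ≥ 1`, so `u`
never vanishes. On `[c,b]` the function `w = u - u(c) cosh(λ(t - c))` satisfies
`w'' - λ² w = (q - λ²) u ≥ 0` with `w(c) = 0`, `w'(c) = u'(c) ≥ 0`. Factoring
`w'' - λ² w = (∂ + λ)(∂ - λ) w`, two integrating-factor arguments give `w' - λ w ≥ 0`
and then `w ≥ 0`. Hence `u(b) ≥ u(c) cosh(λ(b - c)) ≥ ½ e^{λ(b-c)} u(t)` for `t ≤ c`.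
-/

open Set Real

lemma monotoneOn_Icc_of_hasDerivAt_nonneg {f f' : ℝ → ℝ} {a b : ℝ}
    (hf : ∀ t ∈ Icc a b, HasDerivAt f (f' t) t) (hf' : ∀ t ∈ Ioo a b, 0 ≤ f' t) :
    MonotoneOn f (Icc a b) := by
  refine monotoneOn_of_deriv_nonneg (convex_Icc a b)
    (fun t ht => (hf t ht).continuousAt.continuousWithinAt) ?_ ?_ <;> rw [interior_Icc]
  · exact fun t ht => (hf t (Ioo_subset_Icc_self ht)).differentiableAt.differentiableWithinAt
  · exact fun t ht => (hf t (Ioo_subset_Icc_self ht)).deriv ▸ hf' t ht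

lemma nonneg_of_hasDerivAt_ge_mul {f f' : ℝ → ℝ} {a b μ : ℝ}
    (hf : ∀ t ∈ Icc a b, HasDerivAt f (f' t) t) (hf' : ∀ t ∈ Ioo a b, μ * f t ≤ f' t)
    (ha : 0 ≤ f a) : ∀ t ∈ Icc a b, 0 ≤ f t := by
  intro t ht
  have hderiv : ∀ s ∈ Icc a b,
      HasDerivAt (fun s => exp (-μ * s) * f s) (exp (-μ * s) * (f' s - μ * f s)) s := by
    intro s hs
    have hexp : HasDerivAt (fun s => exp (-μ * s)) (exp (-μ * s) * (-μ * 1)) s :=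
      ((hasDerivAt_id' s).const_mul (-μ)).exp
    exact (hexp.mul (hf s hs)).congr_deriv (by ring)
  have hmono := monotoneOn_Icc_of_hasDerivAt_nonneg hderiv fun s hs =>
    mul_nonneg (exp_pos _).le (sub_nonneg.mpr (hf' s hs))
  have hle := hmono (left_mem_Icc.mpr (ht.1.trans ht.2)) ht ht.1
  exact nonneg_of_mul_nonneg_right ((mul_nonneg (exp_pos _).le ha).trans hle) (exp_pos _)

lemma cosh_mul_le_of_hasDerivAt {f f' f'' : ℝ → ℝ} {c b lam : ℝ}
    (hf : ∀ t ∈ Icc c b, HasDerivAt f (f' t) t)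
    (hf' : ∀ t ∈ Icc c b, HasDerivAt f' (f'' t) t)
    (hf'' : ∀ t ∈ Ioo c b, lam ^ 2 * f t ≤ f'' t) (hc : 0 ≤ f' c) :
    ∀ t ∈ Icc c b, f c * cosh (lam * (t - c)) ≤ f t := by
  set w : ℝ → ℝ := fun t => f t - f c * cosh (lam * (t - c))
  set w' : ℝ → ℝ := fun t => f' t - f c * (lam * sinh (lam * (t - c)))
  have hlin : ∀ t, HasDerivAt (fun s => lam * (s - c)) lam t := fun t => by
    simpa using ((hasDerivAt_id t).sub_const c).const_mul lam
  have hw : ∀ t ∈ Icc c b, HasDerivAt w (w' t) t := fun t ht =>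
    ((hf t ht).sub ((hlin t).cosh.const_mul (f c))).congr_deriv (by ring)
  have hw' : ∀ t ∈ Icc c b,
      HasDerivAt w' (f'' t - f c * (lam ^ 2 * cosh (lam * (t - c)))) t := fun t ht =>
    ((hf' t ht).sub (((hlin t).sinh.const_mul lam).const_mul (f c))).congr_deriv (by ring)
  have hw'_sub : ∀ t ∈ Icc c b, 0 ≤ w' t - lam * w t := by
    refine nonneg_of_hasDerivAt_ge_mul (μ := -lam)
      (fun t ht => (hw' t ht).sub ((hw t ht).const_mul lam)) (fun t ht => ?_)
      (by simpa [w, w'] using hc)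
    have := hf'' t ht
    simp only [w, w']
    linarith
  have hw_nonneg : ∀ t ∈ Icc c b, 0 ≤ w t :=
    nonneg_of_hasDerivAt_ge_mul (μ := lam) hw
      (fun t ht => sub_nonneg.mp (hw'_sub t (Ioo_subset_Icc_self ht))) (by simp [w])
  exact fun t ht => sub_nonneg.mp (hw_nonneg t ht)

section SecondOrderLinear

variable {q u u' : ℝ → ℝ} {a b : ℝ}

lemma deriv_nonneg_of_ode
    (hu : ∀ t ∈ Icc a b, HasDerivAt u (u' t) t ∧ HasDerivAt u' (q t * u t) t)
    (hqu : ∀ t ∈ Ioo a b, 0 ≤ q t * u t) (hu'a : 0 ≤ u' a) :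
    ∀ t ∈ Icc a b, 0 ≤ u' t :=
  nonneg_of_hasDerivAt_ge_mul (μ := 0) (fun t ht => (hu t ht).2) (by simpa using hqu) hu'a

lemma monotoneOn_of_ode
    (hu : ∀ t ∈ Icc a b, HasDerivAt u (u' t) t ∧ HasDerivAt u' (q t * u t) t)
    (hqu : ∀ t ∈ Ioo a b, 0 ≤ q t * u t) (hu'a : 0 ≤ u' a) : MonotoneOn u (Icc a b) :=
  monotoneOn_Icc_of_hasDerivAt_nonneg (fun t ht => (hu t ht).1) fun t ht =>
    deriv_nonneg_of_ode hu hqu hu'a t (Ioo_subset_Icc_self ht)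

lemma pos_of_ode (hu : ∀ t ∈ Icc a b, HasDerivAt u (u' t) t ∧ HasDerivAt u' (q t * u t) t)
    (hq : ∀ t ∈ Icc a b, 0 ≤ q t) (hua : 0 < u a) (hu'a : 0 ≤ u' a) :
    ∀ t ∈ Icc a b, 0 < u t := by
  by_contra! hneg
  have hcont : ContinuousOn u (Icc a b) := fun t ht =>
    (hu t ht).1.continuousAt.continuousWithinAt
  have hclosed : IsClosed (Icc a b ∩ u ⁻¹' Iic 0) :=
    hcont.preimage_isClosed_of_isClosed isClosed_Icc isClosed_Iic
  obtain ⟨T, ⟨hT, huT⟩, hleast⟩ :=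
    (isCompact_Icc.of_isClosed_subset hclosed inter_subset_left).exists_isLeast hneg
  have hsub : Icc a T ⊆ Icc a b := Icc_subset_Icc_right hT.2
  have hpos : ∀ s ∈ Ico a T, 0 < u s := fun s hs => by
    by_contra! hs'
    exact (hleast ⟨⟨hs.1, hs.2.le.trans hT.2⟩, hs'⟩).not_gt hs.2
  have hmono : MonotoneOn u (Icc a T) :=
    monotoneOn_of_ode (fun t ht => hu t (hsub ht))
      (fun t ht => mul_nonneg (hq t (hsub (Ioo_subset_Icc_self ht)))
        (hpos t (Ioo_subset_Ico_self ht)).le)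
      hu'a
  have := hmono (left_mem_Icc.mpr hT.1) (right_mem_Icc.mpr hT.1) hT.1
  simp only [mem_preimage, mem_Iic] at huT
  linarith

end SecondOrderLinear

theorem stmt_7_general (a b c lam : ℝ) (hac : a ≤ c) (hcb : c < b)
    (q u u' : ℝ → ℝ)
    (hu : ∀ t ∈ Set.Icc a b, HasDerivAt u (u' t) t ∧ HasDerivAt u' (q t * u t) t)
    (hua : u a = 1) (hu'a : u' a = 0)
    (hq0 : ∀ t ∈ Set.Icc a b, 0 ≤ q t)
    (hqc : ∀ t ∈ Set.Icc c b, lam ^ 2 ≤ q t) :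
    (∀ t ∈ Set.Icc a b, 0 < u t) ∧
      ∀ t ∈ Set.Icc a c, u b / u t ≥ 1 / 2 * Real.exp (lam * (b - c)) := by
  have hpos := pos_of_ode hu hq0 (hua ▸ one_pos) hu'a.ge
  have hqu : ∀ t ∈ Ioo a b, 0 ≤ q t * u t := fun t ht =>
    mul_nonneg (hq0 t (Ioo_subset_Icc_self ht)) (hpos t (Ioo_subset_Icc_self ht)).le
  have hsub : Icc c b ⊆ Icc a b := Icc_subset_Icc_left hac
  have hcosh : u c * cosh (lam * (b - c)) ≤ u b :=
    cosh_mul_le_of_hasDerivAt (fun t ht => (hu t (hsub ht)).1) (fun t ht => (hu t (hsub ht)).2)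
      (fun t ht => mul_le_mul_of_nonneg_right (hqc t (Ioo_subset_Icc_self ht))
        (hpos t (hsub (Ioo_subset_Icc_self ht))).le)
      (deriv_nonneg_of_ode hu hqu hu'a.ge c ⟨hac, hcb.le⟩) b ⟨hcb.le, le_rfl⟩
  have hexp_le_cosh : 1 / 2 * exp (lam * (b - c)) ≤ cosh (lam * (b - c)) := by
    rw [cosh_eq]
    linarith [exp_pos (-(lam * (b - c)))]
  refine ⟨hpos, fun t ht => ?_⟩
  have htab : t ∈ Icc a b := ⟨ht.1, ht.2.trans hcb.le⟩
  have hut_le : u t ≤ u c := monotoneOn_of_ode hu hqu hu'a.ge htab ⟨hac, hcb.le⟩ ht.2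
  rw [ge_iff_le, le_div_iff₀ (hpos t htab)]
  calc 1 / 2 * exp (lam * (b - c)) * u t ≤ cosh (lam * (b - c)) * u c :=
        mul_le_mul hexp_le_cosh hut_le (hpos t htab).le (cosh_pos _).le
    _ ≤ u b := mul_comm (u c) _ ▸ hcosh

/-- **Lemma 5.2 of the paper.** Let `u` solve `u'' = q u` on `[a,b]` with `u(a) = 1`,
`u'(a) = 0`, where `q` is continuous, `q ≥ 0` on `[a,b]` and `q ≥ λ²` on `[c,b]`
for some `λ > 0` and `c ∈ [a,b)`. Then `u > 0` on `[a,b]` and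
`u(b)/u(t) ≥ ½ e^{λ(b−c)}` for all `t ∈ [a,c]`. -/
theorem stmt_7 (a b c lam : ℝ) (hac : a ≤ c) (hcb : c < b) (hlam : 0 < lam)
    (q u u' : ℝ → ℝ) (hq : ContinuousOn q (Set.Icc a b))
    (hu : ∀ t ∈ Set.Icc a b, HasDerivAt u (u' t) t ∧ HasDerivAt u' (q t * u t) t)
    (hua : u a = 1) (hu'a : u' a = 0)
    (hq0 : ∀ t ∈ Set.Icc a b, 0 ≤ q t)
    (hqc : ∀ t ∈ Set.Icc c b, lam ^ 2 ≤ q t) :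
    (∀ t ∈ Set.Icc a b, 0 < u t) ∧
      ∀ t ∈ Set.Icc a c, u b / u t ≥ 1 / 2 * Real.exp (lam * (b - c)) :=
  stmt_7_general a b c lam hac hcb q u u' hu hua hu'a hq0 hqc
end

section
/- Let q : [a,b] → ℝ be continuous and suppose the differential equation u''(t) + q(t)·u(t) = 0 admits a nontrivial solution u on [a,b] satisfying u'(a) = u'(b) = 0 and having exactly m zeros in the open interval (a,b), where m ∈ ℕ₀. Then there exists t ∈ (a,b) such that q(t) = π² m² / (b − a)². -/
/-!
If `q` never equals `ω² = (mπ / (b - a))²` on `(a, b)`, then by continuity it stays on one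
side of `ω²`. Compare `u` with `v t = cos (ω (t - a))`, which satisfies the same Neumann
conditions and has exactly `m` zeros in `(a, b)`. Sturm comparison, via the Wronskian
`f' g - f g'`, puts a zero of the solution with the larger coefficient strictly between any two
consecutive zeros or Neumann endpoints of the other one, so that solution has at least `m + 1`
zeros: impossible for `u` and for `v` alike.
-/

open Set Real Filter Topology

def SolvesOn (q u u' : ℝ → ℝ) (s : Set ℝ) : Prop :=
  ∀ t ∈ s, HasDerivAt u (u' t) t ∧ HasDerivAt u' (-(q t) * u t) t

namespace SolvesOn

variable {q u u' : ℝ → ℝ} {s : Set ℝ}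

theorem mono {s' : Set ℝ} (h : SolvesOn q u u' s) (hs : s' ⊆ s) : SolvesOn q u u' s' :=
  fun t ht => h t (hs ht)

theorem neg (h : SolvesOn q u u' s) : SolvesOn q (fun t => -u t) (fun t => -u' t) s :=
  fun t ht => ⟨(h t ht).1.neg, (h t ht).2.neg.congr_deriv (by ring)⟩

theorem continuousOn (h : SolvesOn q u u' s) : ContinuousOn u s :=
  fun t ht => (h t ht).1.continuousAt.continuousWithinAt

end SolvesOn

theorem solvesOn_cos (ω c : ℝ) (s : Set ℝ) :
    SolvesOn (fun _ => ω ^ 2) (fun t => cos (ω * (t - c)))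
      (fun t => -(ω * sin (ω * (t - c)))) s := by
  intro t _
  have hlin : HasDerivAt (fun t => ω * (t - c)) ω t := by
    simpa using ((hasDerivAt_id t).sub_const c).const_mul ω
  exact ⟨((hasDerivAt_cos _).comp t hlin).congr_deriv (by ring),
    (((hasDerivAt_sin _).comp t hlin).const_mul ω).neg.congr_deriv (by ring)⟩

theorem IsPreconnected.forall_lt_or_forall_lt {s : Set ℝ} (hs : IsPreconnected s)
    {f g : ℝ → ℝ} (hf : ContinuousOn f s) (hg : ContinuousOn g s)
    (hne : ∀ t ∈ s, f t ≠ g t) :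
    (∀ t ∈ s, f t < g t) ∨ (∀ t ∈ s, g t < f t) := by
  by_contra! ⟨⟨x, hx, hgx⟩, ⟨y, hy, hfy⟩⟩
  obtain ⟨z, hz, hfz⟩ := hs.intermediate_value₂ hy hx hf hg hfy hgx
  exact hne z hz hfz

theorem HasDerivAt.nonneg_of_eventually_le_right {g : ℝ → ℝ} {g' c : ℝ}
    (hg : HasDerivAt g g' c) (h : ∀ᶠ t in 𝓝[>] c, g c ≤ g t) : 0 ≤ g' := by
  refine ge_of_tendsto ((hasDerivWithinAt_iff_tendsto_slope' (by simp)).1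
    (hg.hasDerivWithinAt (s := Ioi c))) ?_
  filter_upwards [h, self_mem_nhdsWithin] with t ht htc
  rw [slope_def_field]
  exact div_nonneg (sub_nonneg.2 ht) (sub_nonneg.2 (le_of_lt htc))

theorem HasDerivAt.nonpos_of_eventually_le_left {g : ℝ → ℝ} {g' c : ℝ}
    (hg : HasDerivAt g g' c) (h : ∀ᶠ t in 𝓝[<] c, g c ≤ g t) : g' ≤ 0 := by
  refine le_of_tendsto ((hasDerivWithinAt_iff_tendsto_slope' (by simp)).1
    (hg.hasDerivWithinAt (s := Iio c))) ?_
  filter_upwards [h, self_mem_nhdsWithin] with t ht htc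
  rw [slope_def_field]
  exact div_nonpos_of_nonneg_of_nonpos (sub_nonneg.2 ht) (sub_nonpos.2 (le_of_lt htc))

section SturmComparison

variable {c d : ℝ} {F G f f' g g' : ℝ → ℝ}

theorem sturm_comparison_of_pos (hcd : c < d) (hf : SolvesOn F f f' (Icc c d))
    (hg : SolvesOn G g g' (Icc c d)) (hGF : ∀ t ∈ Ioo c d, G t < F t)
    (hfpos : ∀ t ∈ Ioo c d, 0 < f t) (hgpos : ∀ t ∈ Ioo c d, 0 < g t)
    (hc : (f' c = 0 ∧ g' c = 0) ∨ g c = 0) (hd : (f' d = 0 ∧ g' d = 0) ∨ g d = 0) :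
    False := by
  have hcd' : c ≤ d := hcd.le
  set W : ℝ → ℝ := fun t => f' t * g t - f t * g' t
  have hW : ∀ t ∈ Icc c d, HasDerivAt W ((G t - F t) * (f t * g t)) t := fun t ht =>
    (((hf t ht).2.mul (hg t ht).1).sub ((hf t ht).1.mul (hg t ht).2)).congr_deriv (by ring)
  -- the Wronskian strictly decreases, but the boundary conditions force `W c ≤ 0 ≤ W d`
  obtain ⟨ξ, hξ, hWξ⟩ := exists_hasDerivAt_eq_slope W _ hcd
    (fun t ht => (hW t ht).continuousAt.continuousWithinAt)
    (fun t ht => hW t (Ioo_subset_Icc_self ht))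
  have hdecr : W d < W c := by
    have : (G ξ - F ξ) * (f ξ * g ξ) < 0 :=
      mul_neg_of_neg_of_pos (sub_neg.2 (hGF ξ hξ)) (mul_pos (hfpos ξ hξ) (hgpos ξ hξ))
    rw [hWξ, div_neg_iff] at this
    rcases this with ⟨-, h⟩ | ⟨h, -⟩ <;> linarith
  have hWc : W c ≤ 0 := by
    rcases hc with ⟨hf'c, hg'c⟩ | hgc
    · simp [W, hf'c, hg'c]
    · have hfc : 0 ≤ f c := ge_of_tendsto
        (((hf c ⟨le_rfl, hcd'⟩).1.continuousAt.tendsto).mono_left nhdsWithin_le_nhds)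
        (eventually_of_mem (Ioo_mem_nhdsGT hcd) fun t ht => (hfpos t ht).le)
      have hg'c : 0 ≤ g' c := (hg c ⟨le_rfl, hcd'⟩).1.nonneg_of_eventually_le_right
        (eventually_of_mem (Ioo_mem_nhdsGT hcd) fun t ht => hgc ▸ (hgpos t ht).le)
      simp only [W, hgc, mul_zero, zero_sub, neg_nonpos]
      exact mul_nonneg hfc hg'c
  have hWd : 0 ≤ W d := by
    rcases hd with ⟨hf'd, hg'd⟩ | hgd
    · simp [W, hf'd, hg'd]
    · have hfd : 0 ≤ f d := ge_of_tendsto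
        (((hf d ⟨hcd', le_rfl⟩).1.continuousAt.tendsto).mono_left nhdsWithin_le_nhds)
        (eventually_of_mem (Ioo_mem_nhdsLT hcd) fun t ht => (hfpos t ht).le)
      have hg'd : g' d ≤ 0 := (hg d ⟨hcd', le_rfl⟩).1.nonpos_of_eventually_le_left
        (eventually_of_mem (Ioo_mem_nhdsLT hcd) fun t ht => hgd ▸ (hgpos t ht).le)
      simp only [W, hgd, mul_zero, zero_sub, neg_nonneg]
      exact mul_nonpos_of_nonneg_of_nonpos hfd hg'd
  linarith

theorem sturm_comparison (hcd : c < d) (hf : SolvesOn F f f' (Icc c d))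
    (hg : SolvesOn G g g' (Icc c d)) (hGF : ∀ t ∈ Ioo c d, G t < F t)
    (hg0 : ∀ t ∈ Ioo c d, g t ≠ 0)
    (hc : (f' c = 0 ∧ g' c = 0) ∨ g c = 0) (hd : (f' d = 0 ∧ g' d = 0) ∨ g d = 0) :
    ∃ t ∈ Ioo c d, f t = 0 := by
  by_contra! hf0
  have hsign {h h' H : ℝ → ℝ} (hh : SolvesOn H h h' (Icc c d))
      (hh0 : ∀ t ∈ Ioo c d, h t ≠ 0) :=
    isPreconnected_Ioo.forall_lt_or_forall_lt (hh.continuousOn.mono Ioo_subset_Icc_self)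
      continuousOn_const hh0
  wlog hfpos : ∀ t ∈ Ioo c d, 0 < f t generalizing f f'
  · refine this hf.neg (by simpa using hc) (by simpa using hd) (by simpa using hf0) ?_
    exact fun t ht => neg_pos.2 ((hsign hf hf0).resolve_right hfpos t ht)
  wlog hgpos : ∀ t ∈ Ioo c d, 0 < g t generalizing g g'
  · refine this hg.neg (by simpa using hg0) (by simpa using hc) (by simpa using hd) ?_
    exact fun t ht => neg_pos.2 ((hsign hg hg0).resolve_right hgpos t ht)
  exact sturm_comparison_of_pos hcd hf hg hGF hfpos hgpos hc hd

theorem sturm_encard_zeros (n : ℕ) (hcd : c < d) (hf : SolvesOn F f f' (Icc c d))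
    (hg : SolvesOn G g g' (Icc c d)) (hGF : ∀ t ∈ Ioo c d, G t < F t)
    (hc : (f' c = 0 ∧ g' c = 0) ∨ g c = 0) (hf'd : f' d = 0) (hg'd : g' d = 0)
    (hg0 : {t ∈ Ioo c d | g t = 0}.encard = n) :
    (n : ℕ∞) + 1 ≤ {t ∈ Ioo c d | f t = 0}.encard := by
  induction n generalizing c with
  | zero =>
    have hg0 : ∀ t ∈ Ioo c d, g t ≠ 0 := fun t ht h0 => by
      simpa using (Set.encard_eq_zero.1 hg0).subset ⟨ht, h0⟩
    obtain ⟨t, ht, hft⟩ := sturm_comparison hcd hf hg hGF hg0 hc (.inl ⟨hf'd, hg'd⟩)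
    simpa [Order.one_le_iff_pos] using Set.encard_pos.2
      (⟨t, ht, hft⟩ : {t ∈ Ioo c d | f t = 0}.Nonempty)
  | succ n ih =>
    set Z := {t ∈ Ioo c d | g t = 0}
    -- split `(c, d)` at the first zero `s` of `g`
    obtain ⟨s, hsZ, hsmin⟩ := Z.exists_min_image id (Set.finite_of_encard_eq_coe hg0)
      (Set.encard_pos.1 (by rw [hg0]; exact_mod_cast n.succ_pos))
    have hcs : c < s := hsZ.1.1
    have hsd : s < d := hsZ.1.2
    obtain ⟨t₀, ht₀, hft₀⟩ := sturm_comparison hcs (hf.mono (Icc_subset_Icc_right hsd.le))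
      (hg.mono (Icc_subset_Icc_right hsd.le)) (fun t ht => hGF t ⟨ht.1, ht.2.trans hsd⟩)
      (fun t ht h0 => (hsmin t ⟨⟨ht.1, ht.2.trans hsd⟩, h0⟩).not_gt ht.2) hc (.inr hsZ.2)
    have hZs : {t ∈ Ioo s d | g t = 0} = Z \ {s} := by
      ext t
      constructor
      · rintro ⟨ht, h0⟩
        exact ⟨⟨⟨hcs.trans ht.1, ht.2⟩, h0⟩, ht.1.ne'⟩
      · rintro ⟨htZ, hts⟩
        exact ⟨⟨lt_of_le_of_ne (hsmin t htZ) (Ne.symm hts), htZ.1.2⟩, htZ.2⟩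
    have hIH := ih hsd (hf.mono (Icc_subset_Icc_left hcs.le))
      (hg.mono (Icc_subset_Icc_left hcs.le))
      (fun t ht => hGF t ⟨hcs.trans ht.1, ht.2⟩) (.inr hsZ.2)
      (by rw [hZs, Set.encard_sdiff_singleton_of_mem hsZ, hg0]; norm_cast)
    calc ((n + 1 : ℕ) : ℕ∞) + 1 ≤ {t ∈ Ioo s d | f t = 0}.encard + 1 := by
          push_cast; gcongr
      _ = (insert t₀ {t ∈ Ioo s d | f t = 0}).encard :=
          (Set.encard_insert_of_notMem fun h => h.1.1.not_gt ht₀.2).symm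
      _ ≤ {t ∈ Ioo c d | f t = 0}.encard := by
          refine Set.encard_mono (Set.insert_subset ⟨⟨ht₀.1, ht₀.2.trans hsd⟩, hft₀⟩ ?_)
          exact fun t ht => ⟨⟨hcs.trans ht.1.1, ht.1.2⟩, ht.2⟩

end SturmComparison

-- the zeros are the points where the argument is an odd multiple of `π / 2`
theorem setOf_cos_eq_zero_eq_image {a b : ℝ} (hab : a < b) {m : ℕ} (hm : 0 < m) :
    {t ∈ Ioo a b | cos (m * π / (b - a) * (t - a)) = 0} =
      (fun k : ℕ => a + (2 * k + 1) * (b - a) / (2 * m)) '' {k | k < m} := by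
  have hba : 0 < b - a := sub_pos.2 hab
  have hmR : (0 : ℝ) < m := Nat.cast_pos.2 hm
  ext t
  constructor
  · rintro ⟨⟨hat, htb⟩, ht0⟩
    obtain ⟨k, hk⟩ := cos_eq_zero_iff.1 ht0
    have hpos : 0 < m * π / (b - a) * (t - a) := by
      have := pi_pos; have := sub_pos.2 hat; positivity
    have hlt : m * π / (b - a) * (t - a) < m * π := by
      rw [div_mul_eq_mul_div, div_lt_iff₀ hba]
      exact mul_lt_mul_of_pos_left (by linarith) (by positivity)
    rw [hk] at hpos hlt
    have hk0 : (0 : ℤ) ≤ k := by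
      have : (-1 : ℝ) < k := by nlinarith [pi_pos]
      have : (-1 : ℤ) < k := by exact_mod_cast this
      omega
    have hkm : k < (m : ℤ) := by
      have : (k : ℝ) < m := by nlinarith [pi_pos]
      exact_mod_cast this
    refine ⟨k.toNat, show k.toNat < m by omega, ?_⟩
    have hcast : ((k.toNat : ℕ) : ℝ) = k := by exact_mod_cast Int.toNat_of_nonneg hk0
    simp only [hcast]
    rw [eq_comm, ← sub_eq_iff_eq_add', eq_div_iff (by positivity)]
    field_simp at hk
    linarith
  · rintro ⟨k, hk, rfl⟩
    have hk' : (k : ℝ) + 1 ≤ m := by exact_mod_cast hk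
    refine ⟨⟨lt_add_of_pos_right a (by positivity), ?_⟩, cos_eq_zero_iff.2 ⟨k, ?_⟩⟩
    · rw [← sub_pos]
      field_simp
      nlinarith
    · field_simp
      push_cast
      ring

theorem encard_setOf_cos_eq_zero {a b : ℝ} (hab : a < b) (m : ℕ) :
    {t ∈ Ioo a b | cos (m * π / (b - a) * (t - a)) = 0}.encard = m := by
  rcases Nat.eq_zero_or_pos m with rfl | hm
  · simp
  rw [setOf_cos_eq_zero_eq_image hab hm, Set.InjOn.encard_image, Set.Nat.encard_range]
  intro i _ j _ hij
  have hba : b - a ≠ 0 := (sub_pos.2 hab).ne'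
  have hm : (m : ℝ) ≠ 0 := Nat.cast_ne_zero.2 hm.ne'
  simp only [add_right_inj, div_left_inj' (mul_ne_zero two_ne_zero hm),
    mul_left_inj' hba] at hij
  exact_mod_cast (by linarith : (i : ℝ) = j)

theorem stmt_8_general (a b : ℝ) (hab : a < b) (m : ℕ)
    (q u u' : ℝ → ℝ) (hq : ContinuousOn q (Set.Icc a b))
    (hu : ∀ t ∈ Set.Icc a b, HasDerivAt u (u' t) t ∧ HasDerivAt u' (-(q t) * u t) t)
    (hu'a : u' a = 0) (hu'b : u' b = 0)
    (hzeros : {t ∈ Set.Ioo a b | u t = 0}.encard = (m : ℕ∞)) :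
    ∃ t ∈ Set.Ioo a b, q t = Real.pi ^ 2 * (m : ℝ) ^ 2 / (b - a) ^ 2 := by
  set ω := m * π / (b - a)
  have hω : π ^ 2 * (m : ℝ) ^ 2 / (b - a) ^ 2 = ω ^ 2 := by
    rw [div_pow, mul_pow, mul_comm]
  have hu : SolvesOn q u u' (Icc a b) := hu
  -- compare with `v t = cos (ω (t - a))`, the Neumann solution with exactly `m` zeros
  have hv := solvesOn_cos ω a (Icc a b)
  have hv'a : -(ω * sin (ω * (a - a))) = 0 := by simp
  have hv'b : -(ω * sin (ω * (b - a))) = 0 := by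
    rw [div_mul_cancel₀ _ (sub_pos.2 hab).ne', sin_nat_mul_pi]; simp
  have hvzeros := encard_setOf_cos_eq_zero hab m
  by_contra! hne
  rcases isPreconnected_Ioo.forall_lt_or_forall_lt (hq.mono Ioo_subset_Icc_self)
    continuousOn_const (fun t ht => hω ▸ hne t ht) with hlt | hgt
  · have := sturm_encard_zeros m hab hv hu hlt (.inl ⟨hv'a, hu'a⟩) hv'b hu'b hzeros
    exact absurd (this.trans_eq hvzeros) (by norm_cast; omega)
  · have := sturm_encard_zeros m hab hu hv hgt (.inl ⟨hu'a, hv'a⟩) hu'b hv'b hvzeros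
    exact absurd (this.trans_eq hzeros) (by norm_cast; omega)

/-- **Oscillation comparison fact** (from the proof of Theorem 5.2 of the paper).
If `u'' + q u = 0` with continuous `q` admits a nontrivial solution `u` with
`u'(a) = u'(b) = 0` having exactly `m` zeros in `(a,b)`, then there is `t ∈ (a,b)`
with `q(t) = π² m²/(b−a)²`. -/
theorem stmt_8 (a b : ℝ) (hab : a < b) (m : ℕ)
    (q u u' : ℝ → ℝ) (hq : ContinuousOn q (Set.Icc a b))
    (hu : ∀ t ∈ Set.Icc a b, HasDerivAt u (u' t) t ∧ HasDerivAt u' (-(q t) * u t) t)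
    (hnontriv : ∃ t ∈ Set.Icc a b, u t ≠ 0)
    (hu'a : u' a = 0) (hu'b : u' b = 0)
    (hzeros : {t ∈ Set.Ioo a b | u t = 0}.encard = (m : ℕ∞)) :
    ∃ t ∈ Set.Ioo a b, q t = Real.pi ^ 2 * (m : ℝ) ^ 2 / (b - a) ^ 2 :=
  stmt_8_general a b hab m q u u' hq hu hu'a hu'b hzeros
end
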